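/- arXiv:2412.00298 — 4 statements merged into one kernel-verified Lean document; each statement's English description precedes it below -/
import Mathlib

section
/- Let V : H → K be a linear isometry between complex Hilbert spaces, A a von Neumann algebra on K, and B a von Neumann algebra on H. Suppose R' : B' → B(K) is a map such that for every b' ∈ B': (i) R'(b') commutes with every element of A, (ii) R'(b'*) = R'(b')*, and (iii) R'(b')V = Vb'. Then V*aV ∈ B for every a ∈ A. -/
open ContinuousLinearMap

/-- Privacy: if `R' : B' → B(K)` maps into the commutant of `A`, is star-preserving, and
intertwines `V` (`R'(b')V = Vb'`), then `V* a V ∈ B` for every `a ∈ A`. -/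
theorem compression_mem_of_intertwiner
    {H K : Type*} [NormedAddCommGroup H] [InnerProductSpace ℂ H] [CompleteSpace H]
    [NormedAddCommGroup K] [InnerProductSpace ℂ K] [CompleteSpace K]
    (V : H →L[ℂ] K) (hV : ∀ ξ : H, ‖V ξ‖ = ‖ξ‖)
    (A : VonNeumannAlgebra K) (B : VonNeumannAlgebra H)
    (R' : (H →L[ℂ] H) → (K →L[ℂ] K))
    (hR'comm : ∀ b' ∈ B.commutant, ∀ a ∈ A, Commute (R' b') a)
    (hR'star : ∀ b' ∈ B.commutant, R' (star b') = star (R' b'))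
    (hR'int : ∀ b' ∈ B.commutant, (R' b').comp V = V.comp b') :
    ∀ a ∈ A, (ContinuousLinearMap.adjoint V).comp (a.comp V) ∈ B := by
  intro a ha
  rw [← B.commutant_commutant]
  rw [VonNeumannAlgebra.mem_commutant_iff]
  intro b' hb'
  -- key: V* R'(b') = b' V*  from adjoint of  R'(star b') V = V star b'
  have hb's : star b' ∈ B.commutant := star_mem hb'
  have h1 : (R' (star b')).comp V = V.comp (star b') := hR'int _ hb's
  have h2 : (star (R' b')).comp V = V.comp (star b') := by
    rw [← hR'star _ hb']; exact h1
  have h3 : (ContinuousLinearMap.adjoint V).comp (R' b') = b'.comp (ContinuousLinearMap.adjoint V) := by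
    have := congrArg ContinuousLinearMap.adjoint h2
    rwa [adjoint_comp, adjoint_comp, star_eq_adjoint, adjoint_adjoint,
      star_eq_adjoint, adjoint_adjoint] at this
  have h4 : a.comp ((R' b').comp V) = (R' b').comp (a.comp V) := by
    rw [← comp_assoc, ← comp_assoc]
    congr 1
    exact ((hR'comm _ hb' a ha).symm : a * R' b' = R' b' * a)
  calc b' * ((ContinuousLinearMap.adjoint V).comp (a.comp V))
      = (b'.comp (ContinuousLinearMap.adjoint V)).comp (a.comp V) := by
        rw [mul_def, comp_assoc]
    _ = ((ContinuousLinearMap.adjoint V).comp (R' b')).comp (a.comp V) := by rw [h3]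
    _ = (ContinuousLinearMap.adjoint V).comp ((R' b').comp (a.comp V)) := by rw [comp_assoc]
    _ = (ContinuousLinearMap.adjoint V).comp (a.comp ((R' b').comp V)) := by rw [h4]
    _ = (ContinuousLinearMap.adjoint V).comp (a.comp (V.comp b')) := by rw [hR'int _ hb']
    _ = ((ContinuousLinearMap.adjoint V).comp (a.comp V)) * b' := by
        rw [mul_def, comp_assoc, comp_assoc]
end

section
/- Let V : H → K be a linear isometry between complex Hilbert spaces, A a von Neumann algebra on K, B a von Neumann algebra on H, and ψ ∈ H. Assume: (i) there is a map R' : B' → B(K) such that for every b' ∈ B', R'(b') commutes with every element of A and R'(b')V = Vb'; and (ii) V*a'V ∈ B' for every a' ∈ A'. Let P be the orthogonal projection of H onto the closure of the subspace {b'ψ : b' ∈ B'}, and Q the orthogonal projection of K onto the closure of the subspace {a'Vψ : a' ∈ A'}. Then VP = QV. -/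
open ContinuousLinearMap

/-- `V s(ω_ψ) = s(ω_{Vψ}) V`: the isometry `V` intertwines the orthogonal projections onto
the closures of `B'ψ` and `A'Vψ`, assuming an Arveson-type intertwiner `R' : B' → A'` and
privacy `V* A' V ⊆ B'`. Orthogonal projections are encoded as self-adjoint idempotents with
the prescribed ranges. -/
theorem support_projection_intertwine
    {H K : Type*} [NormedAddCommGroup H] [InnerProductSpace ℂ H] [CompleteSpace H]
    [NormedAddCommGroup K] [InnerProductSpace ℂ K] [CompleteSpace K]
    (V : H →L[ℂ] K) (hV : ∀ ξ : H, ‖V ξ‖ = ‖ξ‖)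
    (A : VonNeumannAlgebra K) (B : VonNeumannAlgebra H) (ψ : H)
    (R' : (H →L[ℂ] H) → (K →L[ℂ] K))
    (hR'comm : ∀ b' ∈ B.commutant, ∀ a ∈ A, Commute (R' b') a)
    (hR'int : ∀ b' ∈ B.commutant, (R' b').comp V = V.comp b')
    (hpriv : ∀ a' ∈ A.commutant,
      (ContinuousLinearMap.adjoint V).comp (a'.comp V) ∈ B.commutant)
    (P : H →L[ℂ] H) (hPidem : IsIdempotentElem P) (hPsa : IsSelfAdjoint P)
    (hPrange : Set.range P = closure {y : H | ∃ b' ∈ B.commutant, y = b' ψ})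
    (Q : K →L[ℂ] K) (hQidem : IsIdempotentElem Q) (hQsa : IsSelfAdjoint Q)
    (hQrange : Set.range Q = closure {y : K | ∃ a' ∈ A.commutant, y = a' (V ψ)}) :
    V.comp P = Q.comp V := by
  -- fixed points of idempotents
  have hPfix : ∀ x ∈ Set.range P, P x = x := by
    rintro _ ⟨z, rfl⟩
    have := congrArg (fun T : H →L[ℂ] H => T z) hPidem
    simpa using this
  have hQfix : ∀ x ∈ Set.range Q, Q x = x := by
    rintro _ ⟨z, rfl⟩
    have := congrArg (fun T : K →L[ℂ] K => T z) hQidem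
    simpa using this
  -- V maps B'ψ into A'(Vψ)
  have hmapsV : Set.MapsTo V {y : H | ∃ b' ∈ B.commutant, y = b' ψ}
      {y : K | ∃ a' ∈ A.commutant, y = a' (V ψ)} := by
    rintro _ ⟨b', hb', rfl⟩
    refine ⟨R' b', ?_, ?_⟩
    · rw [VonNeumannAlgebra.mem_commutant_iff]
      intro g hg
      exact (hR'comm b' hb' g hg).symm
    · have := congrArg (fun T : H →L[ℂ] K => T ψ) (hR'int b' hb')
      simpa using this.symm
  -- V† maps A'(Vψ) into B'ψ
  have hmapsVadj : Set.MapsTo (ContinuousLinearMap.adjoint V)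
      {y : K | ∃ a' ∈ A.commutant, y = a' (V ψ)}
      {y : H | ∃ b' ∈ B.commutant, y = b' ψ} := by
    rintro _ ⟨a', ha', rfl⟩
    exact ⟨(ContinuousLinearMap.adjoint V).comp (a'.comp V), hpriv a' ha', rfl⟩
  -- Q ∘ V ∘ P = V ∘ P
  have h1 : Q.comp (V.comp P) = V.comp P := by
    ext x
    simp only [comp_apply]
    apply hQfix
    rw [hQrange]
    have hPx : P x ∈ closure {y : H | ∃ b' ∈ B.commutant, y = b' ψ} := by
      rw [← hPrange]; exact ⟨x, rfl⟩
    exact map_mem_closure V.continuous hPx hmapsV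
  -- P ∘ V† ∘ Q = V† ∘ Q
  have h2 : P.comp ((ContinuousLinearMap.adjoint V).comp Q)
      = (ContinuousLinearMap.adjoint V).comp Q := by
    ext x
    simp only [comp_apply]
    apply hPfix
    rw [hPrange]
    have hQx : Q x ∈ closure {y : K | ∃ a' ∈ A.commutant, y = a' (V ψ)} := by
      rw [← hQrange]; exact ⟨x, rfl⟩
    exact map_mem_closure (ContinuousLinearMap.adjoint V).continuous hQx hmapsVadj
  -- take adjoints of h2: Q ∘ V ∘ P = Q ∘ V
  have h3 : (Q.comp V).comp P = Q.comp V := by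
    have := congrArg ContinuousLinearMap.adjoint h2
    simp only [adjoint_comp, adjoint_adjoint, hPsa.adjoint_eq, hQsa.adjoint_eq] at this
    simpa [comp_assoc] using this
  calc V.comp P = Q.comp (V.comp P) := h1.symm
    _ = (Q.comp V).comp P := by rw [comp_assoc]
    _ = Q.comp V := h3
end

section
/- Let V : H → K be a linear isometry between complex Hilbert spaces, T ∈ B(K), u a unitary operator on H, and r ∈ B(K) an operator commuting with T (rT = Tr). Then for all ξ, η ∈ H: |⟨(V*TV·u − u·V*TV)ξ, η⟩| ≤ ‖T‖·(‖(Vu − rV)ξ‖·‖η‖ + ‖ξ‖·‖(r*V − Vu*)η‖). -/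
/-! The compression `V*TV` fails to commute with `u` by exactly
`⟪T (Vu − rV) ξ, V η⟫ + ⟪T V ξ, (r*V − Vu*) η⟫`: expanding both inner products, the two terms
containing `r` are `⟪T r V ξ, V η⟫` and `⟪T V ξ, r* V η⟫ = ⟪r T V ξ, V η⟫`, which cancel since
`rT = Tr`. Cauchy–Schwarz and `‖Vζ‖ = ‖ζ‖` then bound each term. -/

open ContinuousLinearMap

section

variable {𝕜 H K : Type*} [RCLike 𝕜]
  [NormedAddCommGroup H] [InnerProductSpace 𝕜 H] [NormedAddCommGroup K] [InnerProductSpace 𝕜 K]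

theorem norm_inner_apply_le (T : H →L[𝕜] K) (x : H) (y : K) :
    ‖(inner 𝕜 (T x) y : 𝕜)‖ ≤ ‖T‖ * ‖x‖ * ‖y‖ :=
  (norm_inner_le_norm _ _).trans (by gcongr; exact T.le_opNorm x)

theorem inner_compression_commutator_eq [CompleteSpace H] [CompleteSpace K]
    (V : H →L[𝕜] K) (T : K →L[𝕜] K) (u : H →L[𝕜] H)
    {r : K →L[𝕜] K} (hr : r * T = T * r) (ξ η : H) :
    (inner 𝕜 (((adjoint V).comp (T.comp V) * u - u * (adjoint V).comp (T.comp V)) ξ) η : 𝕜) =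
      inner 𝕜 (T ((V.comp u - r.comp V) ξ)) (V η) +
        inner 𝕜 (T (V ξ)) (((star r).comp V - V.comp (star u)) η) := by
  have hr_apply : r (T (V ξ)) = T (r (V ξ)) := congr($hr (V ξ))
  simp only [sub_apply, mul_apply_eq_comp, comp_apply, map_sub, inner_sub_left, inner_sub_right,
    adjoint_inner_left, star_eq_adjoint, adjoint_inner_right, hr_apply]
  rw [← adjoint_inner_right u, adjoint_inner_left]
  ring

end

theorem commutator_estimate_general
    {H K : Type*} [NormedAddCommGroup H] [InnerProductSpace ℂ H] [CompleteSpace H]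
    [NormedAddCommGroup K] [InnerProductSpace ℂ K] [CompleteSpace K]
    (V : H →L[ℂ] K) (hV : ∀ ξ : H, ‖V ξ‖ = ‖ξ‖)
    (T : K →L[ℂ] K) (u : H →L[ℂ] H)
    (r : K →L[ℂ] K) (hr : r * T = T * r) (ξ η : H) :
    ‖(inner ℂ
        ((((ContinuousLinearMap.adjoint V).comp (T.comp V)) * u -
            u * ((ContinuousLinearMap.adjoint V).comp (T.comp V))) ξ)
        η : ℂ)‖ ≤
      ‖T‖ * (‖(V.comp u - r.comp V) ξ‖ * ‖η‖ +
        ‖ξ‖ * ‖((star r).comp V - V.comp (star u)) η‖) := by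
  rw [inner_compression_commutator_eq V T u hr]
  calc _ ≤ ‖T‖ * ‖(V.comp u - r.comp V) ξ‖ * ‖V η‖ +
          ‖T‖ * ‖V ξ‖ * ‖((star r).comp V - V.comp (star u)) η‖ :=
        (norm_add_le _ _).trans (add_le_add (norm_inner_apply_le _ _ _) (norm_inner_apply_le _ _ _))
    _ = _ := by rw [hV, hV]; ring

/-- Quantitative commutator estimate: for an isometry `V`, `T ∈ B(K)`, a unitary `u` on `H`,
and `r ∈ B(K)` commuting with `T`,
`|⟨(V*TV·u − u·V*TV)ξ, η⟩| ≤ ‖T‖(‖(Vu − rV)ξ‖‖η‖ + ‖ξ‖‖(r*V − Vu*)η‖)`. -/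
theorem commutator_estimate
    {H K : Type*} [NormedAddCommGroup H] [InnerProductSpace ℂ H] [CompleteSpace H]
    [NormedAddCommGroup K] [InnerProductSpace ℂ K] [CompleteSpace K]
    (V : H →L[ℂ] K) (hV : ∀ ξ : H, ‖V ξ‖ = ‖ξ‖)
    (T : K →L[ℂ] K) (u : H →L[ℂ] H) (hu : u ∈ unitary (H →L[ℂ] H))
    (r : K →L[ℂ] K) (hr : r * T = T * r) (ξ η : H) :
    ‖(inner ℂ
        ((((ContinuousLinearMap.adjoint V).comp (T.comp V)) * u -
            u * ((ContinuousLinearMap.adjoint V).comp (T.comp V))) ξ)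
        η : ℂ)‖ ≤
      ‖T‖ * (‖(V.comp u - r.comp V) ξ‖ * ‖η‖ +
        ‖ξ‖ * ‖((star r).comp V - V.comp (star u)) η‖) :=
  commutator_estimate_general V hV T u r hr ξ η
end

section
/- Let H be a complex Hilbert space, (T_n)_{n∈ℕ} a sequence in B(H) with sup_n ‖T_n‖ < ∞, b ∈ B(H), and (b_i)_{i∈I} a net in B(H) indexed by a nonempty directed set (equivalently, along a nontrivial filter) with sup_i ‖b_i‖ < ∞, such that b_i ξ → bξ and b_i* ξ → b* ξ for every ξ ∈ H. If for every index i and all ξ, η ∈ H one has ⟨(T_n b_i − b_i T_n)ξ, η⟩ → 0 as n → ∞, then for all ξ, η ∈ H one has ⟨(T_n b − b T_n)ξ, η⟩ → 0 as n → ∞. -/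
open Filter Topology

/-! Fix `ξ, η`. For a single index `i`, the pairings `⟪[Tₙ, b] ξ, η⟫` and `⟪[Tₙ, bᵢ] ξ, η⟫`
differ, uniformly in `n`, by at most `C (‖bᵢ ξ - b ξ‖ ‖η‖ + ‖ξ‖ ‖bᵢ* η - b* η‖)`: move `b - bᵢ`
across the inner product in the second term of the commutator. Strong-* convergence makes this
bound as small as we like, and the commutators with `bᵢ` vanish weakly. -/

theorem tendsto_zero_of_forall_norm_sub_le {α ι E : Type*} [SeminormedAddCommGroup E]
    {la : Filter α} {l : Filter ι} [l.NeBot] {f : α → E} {g : ι → α → E} {c : ι → ℝ}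
    (hg : ∀ i, Tendsto (g i) la (𝓝 0)) (hc : Tendsto c l (𝓝 0))
    (hfg : ∀ i x, ‖f x - g i x‖ ≤ c i) : Tendsto f la (𝓝 0) := by
  rw [Metric.tendsto_nhds]
  intro ε hε
  obtain ⟨i, hi⟩ := (hc.eventually (gt_mem_nhds (half_pos hε))).exists
  filter_upwards [Metric.tendsto_nhds.1 (hg i) _ (half_pos hε)] with x hx
  rw [dist_zero_right] at hx ⊢
  calc ‖f x‖ ≤ ‖f x - g i x‖ + ‖g i x‖ := norm_le_norm_sub_add _ _
    _ < ε / 2 + ε / 2 := add_lt_add_of_le_of_lt ((hfg i x).trans hi.le) hx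
    _ = ε := add_halves ε

section Commutator

variable {𝕜 H : Type*} [RCLike 𝕜] [NormedAddCommGroup H] [InnerProductSpace 𝕜 H]
  [CompleteSpace H]

theorem norm_inner_commutator_sub_le (T a b : H →L[𝕜] H) (ξ η : H) :
    ‖inner 𝕜 ((T * b - b * T) ξ) η - inner 𝕜 ((T * a - a * T) ξ) η‖ ≤
      ‖T‖ * (‖a ξ - b ξ‖ * ‖η‖ + ‖ξ‖ * ‖star a η - star b η‖) := by
  have hsplit : inner 𝕜 ((T * b - b * T) ξ) η - inner 𝕜 ((T * a - a * T) ξ) η =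
      inner 𝕜 (T (b ξ - a ξ)) η + inner 𝕜 (T ξ) (star a η - star b η) := by
    simp only [ContinuousLinearMap.star_eq_adjoint, mul_apply_eq_comp,
      sub_apply, map_sub, inner_sub_left, inner_sub_right,
      ContinuousLinearMap.adjoint_inner_right]
    ring
  have hfirst : ‖inner 𝕜 (T (b ξ - a ξ)) η‖ ≤ ‖T‖ * (‖a ξ - b ξ‖ * ‖η‖) := by
    calc ‖inner 𝕜 (T (b ξ - a ξ)) η‖ ≤ ‖T (b ξ - a ξ)‖ * ‖η‖ := norm_inner_le_norm _ _
      _ ≤ ‖T‖ * ‖b ξ - a ξ‖ * ‖η‖ := by gcongr; exact T.le_opNorm _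
      _ = ‖T‖ * (‖a ξ - b ξ‖ * ‖η‖) := by rw [norm_sub_rev, mul_assoc]
  have hsecond : ‖inner 𝕜 (T ξ) (star a η - star b η)‖ ≤
      ‖T‖ * (‖ξ‖ * ‖star a η - star b η‖) := by
    calc ‖inner 𝕜 (T ξ) (star a η - star b η)‖ ≤ ‖T ξ‖ * ‖star a η - star b η‖ :=
          norm_inner_le_norm _ _
      _ ≤ ‖T‖ * ‖ξ‖ * ‖star a η - star b η‖ := by gcongr; exact T.le_opNorm _
      _ = ‖T‖ * (‖ξ‖ * ‖star a η - star b η‖) := mul_assoc _ _ _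
  rw [hsplit, mul_add]
  exact (norm_add_le _ _).trans (add_le_add hfirst hsecond)

end Commutator

theorem wot_commutator_limit_general
    {H : Type*} [NormedAddCommGroup H] [InnerProductSpace ℂ H] [CompleteSpace H]
    (T : ℕ → (H →L[ℂ] H)) (CT : ℝ) (hT : ∀ n, ‖T n‖ ≤ CT)
    (b : H →L[ℂ] H)
    {ι : Type*} (l : Filter ι) [l.NeBot]
    (bi : ι → (H →L[ℂ] H))
    (hsot : ∀ ξ : H, Tendsto (fun i => (bi i) ξ) l (nhds (b ξ)))
    (hsot_star : ∀ ξ : H, Tendsto (fun i => (star (bi i)) ξ) l (nhds ((star b) ξ)))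
    (hcomm : ∀ (i : ι) (ξ η : H),
      Tendsto (fun n => (inner ℂ ((T n * bi i - bi i * T n) ξ) η : ℂ)) atTop (nhds 0)) :
    ∀ ξ η : H,
      Tendsto (fun n => (inner ℂ ((T n * b - b * T n) ξ) η : ℂ)) atTop (nhds 0) := by
  intro ξ η
  have hbound : Tendsto (fun i => CT * (‖bi i ξ - b ξ‖ * ‖η‖ + ‖ξ‖ * ‖star (bi i) η - star b η‖))
      l (𝓝 0) := by
    have hsmall := ((tendsto_iff_norm_sub_tendsto_zero.1 (hsot ξ)).mul_const ‖η‖).add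
      ((tendsto_iff_norm_sub_tendsto_zero.1 (hsot_star η)).const_mul ‖ξ‖)
    simpa using hsmall.const_mul CT
  refine tendsto_zero_of_forall_norm_sub_le (hcomm · ξ η) hbound fun i n => ?_
  exact (norm_inner_commutator_sub_le (T n) (bi i) b ξ η).trans
    (mul_le_mul_of_nonneg_right (hT n) (by positivity))

/-- Passing weak-operator vanishing of commutators through bounded strong-* limits:
if `sup_n ‖T_n‖ < ∞`, the net `(b_i)` is bounded and converges strong-* to `b`, and
`[T_n, b_i] → 0` weakly for every `i`, then `[T_n, b] → 0` weakly. -/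
theorem wot_commutator_limit
    {H : Type*} [NormedAddCommGroup H] [InnerProductSpace ℂ H] [CompleteSpace H]
    (T : ℕ → (H →L[ℂ] H)) (CT : ℝ) (hT : ∀ n, ‖T n‖ ≤ CT)
    (b : H →L[ℂ] H)
    {ι : Type*} (l : Filter ι) [l.NeBot]
    (bi : ι → (H →L[ℂ] H)) (Cb : ℝ) (hbi : ∀ i, ‖bi i‖ ≤ Cb)
    (hsot : ∀ ξ : H, Tendsto (fun i => (bi i) ξ) l (nhds (b ξ)))
    (hsot_star : ∀ ξ : H, Tendsto (fun i => (star (bi i)) ξ) l (nhds ((star b) ξ)))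
    (hcomm : ∀ (i : ι) (ξ η : H),
      Tendsto (fun n => (inner ℂ ((T n * bi i - bi i * T n) ξ) η : ℂ)) atTop (nhds 0)) :
    ∀ ξ η : H,
      Tendsto (fun n => (inner ℂ ((T n * b - b * T n) ξ) η : ℂ)) atTop (nhds 0) :=
  wot_commutator_limit_general T CT hT b l bi hsot hsot_star hcomm
end
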